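/- arXiv:2006.14029 — 5 statements merged into one kernel-verified Lean document; each statement's English description precedes it below -/
import Mathlib

section
/- Hunt–Szymanski reduction: Let P and S be strings, and for each position i of P let M_S(P(i)) be the list of positions j of S with S(j)=P(i), listed in strictly decreasing order. Let L be the concatenation of M_S(P(1)), M_S(P(2)), ..., M_S(P(|P|)). Then the length of the longest strictly increasing subsequence of L equals the length of the longest common subsequence of P and S. -/
/-!
Each block of `huntList P S` lists the positions of one letter of `P` in `S` in decreasing order,
so a strictly increasing subsequence takes at most one entry from each block. Taking position `j`
from the block of `P[i]` matches `P[i]` with `S[j]`, and increasing positions describe a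
subsequence of `S`. Hence the strictly increasing subsequences of `huntList P S` have exactly the
lengths of the common subsequences of `P` and `S`.
-/

noncomputable def lcsLen {α : Type*} (P S : List α) : ℕ :=
  sSup {n | ∃ w : List α, w.Sublist P ∧ w.Sublist S ∧ w.length = n}

noncomputable def lisLen (L : List ℕ) : ℕ :=
  sSup {n | ∃ w : List ℕ, w.Sublist L ∧ w.Pairwise (· < ·) ∧ w.length = n}

def huntList {α : Type*} [DecidableEq α] (P S : List α) : List ℕ :=
  (P.map (fun c => ((List.range S.length).filter (fun j => S[j]? = some c)).reverse)).flatten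

namespace List

variable {α β : Type*}

theorem map_getElem?_range (S : List α) : (range S.length).map (S[·]?) = S.map some := by
  apply ext_getElem <;> simp

theorem forall₂_getElem?_iff {S v : List α} {w : List ℕ} :
    Forall₂ (fun j c => S[j]? = some c) w v ↔ w.map (S[·]?) = v.map some := by
  rw [← forall₂_eq_eq_eq, forall₂_map_left_iff, forall₂_map_right_iff]

theorem sublist_iff_exists_indices {S v : List α} :
    v <+ S ↔ ∃ w : List ℕ, w.Pairwise (· < ·) ∧ Forall₂ (fun j c => S[j]? = some c) w v := by
  simp_rw [forall₂_getElem?_iff]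
  constructor
  · intro h
    obtain ⟨f, hf⟩ := sublist_iff_exists_orderEmbedding_getElem?_eq.1 h
    refine ⟨(range v.length).map f, pairwise_lt_range.map f fun _ _ h => f.strictMono h, ?_⟩
    rw [map_map, ← map_getElem?_range v]
    exact map_congr_left fun i _ => (hf i).symm
  · rintro ⟨w, hw, hwv⟩
    have hw_range : w <+ range S.length := by
      refine sublist_of_subperm_of_pairwise (r := (· ≤ ·))
        (subperm_of_subset hw.nodup fun j hj => ?_) (hw.imp le_of_lt)
        (pairwise_lt_range.imp le_of_lt)
      have : S[j]? ∈ v.map some := hwv ▸ mem_map_of_mem hj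
      obtain ⟨c, -, hc⟩ := mem_map.1 this
      exact mem_range.2 (getElem?_eq_some_iff.1 hc.symm).1
    obtain ⟨u, hu, hvu⟩ := sublist_map_iff.1 (map_getElem?_range S ▸ hwv ▸ hw_range.map (S[·]?))
    exact map_injective_iff.2 (Option.some_injective α) hvu ▸ hu

theorem Sublist.flatten_map_of_forall₂ {P v : List β} {w : List α} {B : β → List α}
    (hv : v <+ P) (hw : Forall₂ (fun x c => x ∈ B c) w v) : w <+ (P.map B).flatten := by
  induction hv generalizing w with
  | slnil => cases hw; exact nil_sublist _
  | cons p _ ih => exact (ih hw).trans (sublist_append_right _ _)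
  | cons_cons p _ ih =>
    obtain ⟨x, w', hx, hw', rfl⟩ := forall₂_cons_right_iff.1 hw
    exact (singleton_sublist.2 hx).append (ih hw')

theorem exists_forall₂_of_sublist_flatten_map {R : α → α → Prop} {B : β → List α}
    (hB : ∀ c, (B c).Pairwise fun x y => ¬R x y) {P : List β} {w : List α}
    (hw : w.Pairwise R) (hwP : w <+ (P.map B).flatten) :
    ∃ v, v <+ P ∧ Forall₂ (fun x c => x ∈ B c) w v := by
  induction P generalizing w with
  | nil => exact ⟨[], nil_sublist _, by simp_all⟩
  | cons p P ih =>
    obtain ⟨w₁, w₂, rfl, h₁, h₂⟩ := sublist_append_iff.1 hwP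
    obtain ⟨hw₁, hw₂, -⟩ := pairwise_append.1 hw
    obtain ⟨v, hvP, hwv⟩ := ih hw₂ h₂
    rcases w₁ with _ | ⟨x, _ | ⟨y, t⟩⟩
    · exact ⟨v, hvP.cons p, hwv⟩
    · exact ⟨p :: v, hvP.cons_cons p, .cons (h₁.subset (mem_singleton_self x)) hwv⟩
    · exact absurd (rel_of_pairwise_cons hw₁ mem_cons_self)
        (rel_of_pairwise_cons ((hB p).sublist h₁) mem_cons_self)

end List

section HuntSzymanski

variable {α : Type*} [DecidableEq α]

def revMatchIndices (S : List α) (c : α) : List ℕ :=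
  ((List.range S.length).filter (fun j => S[j]? = some c)).reverse

theorem mem_revMatchIndices {S : List α} {c : α} {j : ℕ} :
    j ∈ revMatchIndices S c ↔ S[j]? = some c := by
  simp only [revMatchIndices, List.mem_reverse, List.mem_filter, List.mem_range,
    decide_eq_true_eq, and_iff_right_iff_imp]
  exact fun h => (List.getElem?_eq_some_iff.1 h).1

theorem pairwise_not_lt_revMatchIndices (S : List α) (c : α) :
    (revMatchIndices S c).Pairwise fun i j => ¬i < j :=
  (List.pairwise_reverse.2 (List.pairwise_lt_range.filter _)).imp fun h => h.not_gt

theorem huntList_eq_flatten (P S : List α) :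
    huntList P S = (P.map (revMatchIndices S)).flatten :=
  rfl

end HuntSzymanski

open List in
theorem hunt_szymanski_reduction {α : Type*} [DecidableEq α] (P S : List α) :
    lisLen (huntList P S) = lcsLen P S := by
  have key : ∀ n, (∃ w, w <+ huntList P S ∧ w.Pairwise (· < ·) ∧ w.length = n) ↔
      ∃ v, v <+ P ∧ v <+ S ∧ v.length = n := by
    intro n
    rw [huntList_eq_flatten]
    constructor
    · rintro ⟨w, hwL, hw, rfl⟩
      obtain ⟨v, hvP, hwv⟩ :=
        exists_forall₂_of_sublist_flatten_map (pairwise_not_lt_revMatchIndices S) hw hwL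
      refine ⟨v, hvP, sublist_iff_exists_indices.2 ⟨w, hw, ?_⟩, hwv.length_eq.symm⟩
      exact hwv.imp fun _ _ => mem_revMatchIndices.1
    · rintro ⟨v, hvP, hvS, rfl⟩
      obtain ⟨w, hw, hwv⟩ := sublist_iff_exists_indices.1 hvS
      refine ⟨w, hvP.flatten_map_of_forall₂ ?_, hw, hwv.length_eq⟩
      exact hwv.imp fun _ _ => mem_revMatchIndices.2
  simp only [lisLen, lcsLen, key]
end

section
/- In the Hunt–Szymanski reduction, any strictly increasing subsequence of L of length k yields a common subsequence of P and S of length k; in particular it uses at most one element from each block M_S(P(i)), because each block is strictly decreasing. -/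
namespace List

variable {α β : Type*}

theorem filterMap_getElem?_sublist {l : List α} {is : List ℕ} (h : is.Pairwise (· < ·)) :
    is.filterMap (l[·]?) <+ l := by
  let toFin : ℕ → Option (Fin l.length) := fun j => if hj : j < l.length then some ⟨j, hj⟩ else none
  have hmap : is.filterMap (l[·]?) = (is.filterMap toFin).map (l[·]) := by
    induction is with
    | nil => rfl
    | cons j is ih =>
      by_cases hj : j < l.length <;> simp [toFin, hj, ih h.of_cons]
  rw [hmap]
  refine map_getElem_sublist (h.filterMap toFin ?_)
  intro a a' haa' b hb b' hb'
  simp only [toFin] at hb hb'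
  split at hb <;> split at hb' <;> cases hb <;> cases hb'
  exact haa'

theorem filterMap_sublist_of_sublist_flatten_map {f : α → List β} {g : β → Option α}
    {R : β → β → Prop} {P : List α} {w : List β}
    (hblock : ∀ c ∈ P, (f c).Pairwise fun a b => ¬ R a b)
    (hg : ∀ c ∈ P, ∀ b ∈ f c, g b = some c)
    (hw : w <+ (P.map f).flatten) (hR : w.Pairwise R) : w.filterMap g <+ P := by
  induction P generalizing w with
  | nil => simp_all
  | cons c P ih =>
    rw [map_cons, flatten_cons, sublist_append_iff] at hw
    obtain ⟨w₁, w₂, rfl, hw₁, hw₂⟩ := hw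
    have ih₂ : w₂.filterMap g <+ P :=
      ih (fun c hc => hblock c (mem_cons_of_mem _ hc))
        (fun c hc => hg c (mem_cons_of_mem _ hc)) hw₂ (hR.sublist (sublist_append_right _ _))
    -- a strictly `R`-increasing list meets a block, which is `R`-free, in at most one element
    rcases w₁ with _ | ⟨b, _ | ⟨b', t⟩⟩
    · exact ih₂.trans (sublist_cons_self c P)
    · simpa [hg c mem_cons_self b (hw₁.subset mem_cons_self)] using ih₂.cons_cons c
    · have hRb : R b b' := (pairwise_cons.1 hR).1 b' (by simp)
      exact absurd hRb ((pairwise_cons.1 ((hblock c mem_cons_self).sublist hw₁)).1 b' (by simp))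

end List

section HuntSzymanski

variable {α : Type*} [DecidableEq α]

-- The block `M_S(c)` of `huntList P S`.
def matchPositions (S : List α) (c : α) : List ℕ :=
  ((List.range S.length).filter fun j => S[j]? = some c).reverse

theorem huntList_eq_flatten_map_matchPositions (P S : List α) :
    huntList P S = (P.map (matchPositions S)).flatten := rfl

theorem matchPositions_pairwise_gt (S : List α) (c : α) :
    (matchPositions S c).Pairwise (· > ·) := by
  rw [matchPositions, List.pairwise_reverse]
  exact List.pairwise_lt_range.filter _

theorem getElem?_eq_some_of_mem_matchPositions {S : List α} {c : α} {j : ℕ}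
    (hj : j ∈ matchPositions S c) : S[j]? = some c := by
  simpa [matchPositions] using (List.mem_filter.1 (List.mem_reverse.1 hj)).2

end HuntSzymanski

theorem increasing_subseq_yields_common_subseq {α : Type*} [DecidableEq α]
    (P S : List α) (w : List ℕ) (hw : w.Sublist (huntList P S))
    (hinc : w.Pairwise (· < ·)) :
    ∃ u : List α, u.Sublist P ∧ u.Sublist S ∧ u.length = w.length := by
  rw [huntList_eq_flatten_map_matchPositions] at hw
  refine ⟨w.filterMap (S[·]?), ?_, List.filterMap_getElem?_sublist hinc, ?_⟩
  · exact List.filterMap_sublist_of_sublist_flatten_map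
      (fun c _ => (matchPositions_pairwise_gt S c).imp fun h => lt_asymm h)
      (fun c _ _ hj => getElem?_eq_some_of_mem_matchPositions hj) hw hinc
  · rw [List.length_filterMap_eq_countP, List.countP_eq_length]
    intro j hj
    obtain ⟨_, hblock, hjc⟩ := List.mem_flatten.1 (hw.subset hj)
    obtain ⟨c, -, rfl⟩ := List.mem_map.1 hblock
    simp [getElem?_eq_some_of_mem_matchPositions hjc]
end

section
/- For the Hunt–Szymanski threshold structure built from a list L, the number of nonempty lists T_k equals the length of a longest strictly increasing subsequence of L; more precisely, Min(T_k) is the smallest possible last element over all strictly increasing subsequences of L of length k. -/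
def insertTails : List ℕ → ℕ → List ℕ
  | [], x => [x]
  | t :: ts, x => if x ≤ t then x :: ts else t :: insertTails ts x

def tails (L : List ℕ) : List ℕ := L.foldl insertTails []

/-!
Appending `x` to `L` makes `x` a new possible last element of an increasing subsequence of
length `k + 1` exactly when `k = 0` or some increasing subsequence of length `k` ends below `x`.
Let `k₀` be the first index with `x ≤ T[k₀]` (or `T.length`), `T` being the list of minimal last
elements. Below `k₀` the old minimum is already below `x`; above `k₀` no new subsequence arises,
since truncating one would give a subsequence of length `k₀ + 1` ending below `x ≤ T[k₀]`. So only
the minimum at `k₀` changes, to `x`: exactly the entry that `insertTails` overwrites (or appends).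
-/

section IncreasingSubsequences

variable {α : Type*} [Preorder α]

def IncSubseqEndingAt (L : List α) (k : ℕ) (v : α) : Prop :=
  ∃ w : List α, w.Sublist L ∧ w.Pairwise (· < ·) ∧ w.length = k + 1 ∧ w.getLast? = some v

theorem List.pairwise_lt_append_singleton_iff {w : List α} {u v : α} (hu : w.getLast? = some u) :
    (w ++ [v]).Pairwise (· < ·) ↔ w.Pairwise (· < ·) ∧ u < v := by
  simp [← List.isChain_iff_pairwise, List.isChain_append, hu]

theorem exists_incSubseqEndingAt_iff {L : List α} {k : ℕ} :
    (∃ v, IncSubseqEndingAt L k v) ↔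
      ∃ w : List α, w.Sublist L ∧ w.Pairwise (· < ·) ∧ w.length = k + 1 := by
  constructor
  · rintro ⟨v, w, hsub, hinc, hlen, -⟩
    exact ⟨w, hsub, hinc, hlen⟩
  · rintro ⟨w, hsub, hinc, hlen⟩
    have hne := List.ne_nil_of_length_eq_add_one hlen
    exact ⟨w.getLast hne, w, hsub, hinc, hlen, List.getLast?_eq_some_getLast hne⟩

theorem IncSubseqEndingAt.exists_lt_of_succ {L : List α} {k : ℕ} {v : α}
    (h : IncSubseqEndingAt L (k + 1) v) : ∃ u < v, IncSubseqEndingAt L k u := by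
  obtain ⟨w, hsub, hinc, hlen, hlast⟩ := h
  obtain ⟨w', rfl⟩ := List.getLast?_eq_some_iff.mp hlast
  have hlen' : w'.length = k + 1 := by simpa using hlen
  have hne := List.ne_nil_of_length_eq_add_one hlen'
  have hu := List.getLast?_eq_some_getLast hne
  obtain ⟨hinc', huv⟩ := (List.pairwise_lt_append_singleton_iff hu).mp hinc
  exact ⟨_, huv, w', (List.sublist_append_left _ _).trans hsub, hinc', hlen', hu⟩

theorem IncSubseqEndingAt.exists_le_of_le {L : List α} {j k : ℕ} {v : α}
    (h : IncSubseqEndingAt L j v) (hkj : k ≤ j) : ∃ u ≤ v, IncSubseqEndingAt L k u := by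
  induction j generalizing v with
  | zero => exact ⟨v, le_rfl, Nat.le_zero.mp hkj ▸ h⟩
  | succ j ih =>
    rcases hkj.eq_or_lt with rfl | hkj
    · exact ⟨v, le_rfl, h⟩
    obtain ⟨u, huv, hu⟩ := h.exists_lt_of_succ
    obtain ⟨u', hu'u, hu'⟩ := ih hu (Nat.le_of_lt_succ hkj)
    exact ⟨u', hu'u.trans huv.le, hu'⟩

theorem incSubseqEndingAt_append_singleton_iff {L : List α} {k : ℕ} {x v : α} :
    IncSubseqEndingAt (L ++ [x]) k v ↔
      IncSubseqEndingAt L k v ∨ v = x ∧ (k = 0 ∨ ∃ u < x, IncSubseqEndingAt L (k - 1) u) := by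
  constructor
  · rintro ⟨w, hsub, hinc, hlen, hlast⟩
    obtain ⟨w₁, w₂, rfl, h₁, h₂⟩ := List.sublist_append_iff.mp hsub
    rcases List.sublist_singleton.mp h₂ with rfl | rfl
    · left
      simp only [List.append_nil] at hinc hlen hlast
      exact ⟨w₁, h₁, hinc, hlen, hlast⟩
    right
    refine ⟨by simpa using hlast.symm, ?_⟩
    cases hu : w₁.getLast? with
    | none =>
      left
      simpa [List.getLast?_eq_none_iff.mp hu] using hlen
    | some u =>
      right
      obtain ⟨hinc₁, hux⟩ := (List.pairwise_lt_append_singleton_iff hu).mp hinc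
      have hpos : 0 < w₁.length := List.length_pos_iff.mpr (by rintro rfl; simp at hu)
      exact ⟨u, hux, w₁, h₁, hinc₁, by simp at hlen; omega, hu⟩
  · rintro (⟨w, hsub, hinc, hlen, hlast⟩ | ⟨rfl, rfl | ⟨u, hux, w, hsub, hinc, hlen, hlast⟩⟩)
    · exact ⟨w, hsub.trans (List.sublist_append_left _ _), hinc, hlen, hlast⟩
    · exact ⟨[v], List.sublist_append_right _ _, List.pairwise_singleton _ v, rfl, rfl⟩
    rcases k with _ | k
    · exact ⟨[v], List.sublist_append_right _ _, List.pairwise_singleton _ v, rfl, rfl⟩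
    · exact ⟨w ++ [v], hsub.append (List.Sublist.refl _),
        (List.pairwise_lt_append_singleton_iff hlast).mpr ⟨hinc, hux⟩, by simpa using hlen,
        List.getLast?_concat⟩

end IncreasingSubsequences

theorem getElem?_insertTails (T : List ℕ) (x k : ℕ) :
    (insertTails T x)[k]? = if k = T.findIdx (x ≤ ·) then some x else T[k]? := by
  induction T generalizing k with
  | nil => rcases k with _ | k <;> simp [insertTails]
  | cons t ts ih =>
    by_cases hxt : x ≤ t
    · rcases k with _ | k <;> simp [insertTails, List.findIdx_cons, hxt]
    · rcases k with _ | k <;> simp [insertTails, List.findIdx_cons, hxt, ih]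

theorem exists_getElem?_lt_of_lt_findIdx {T : List ℕ} {x j : ℕ} (hj : j < T.findIdx (x ≤ ·)) :
    ∃ t < x, T[j]? = some t := by
  have hjT : j < T.length := hj.trans_le List.findIdx_le_length
  exact ⟨T[j], by simpa using List.not_of_lt_findIdx hj, List.getElem?_eq_getElem hjT⟩

theorem le_of_getElem?_findIdx {T : List ℕ} {x t : ℕ} (ht : T[T.findIdx (x ≤ ·)]? = some t) :
    x ≤ t := by
  obtain ⟨hlt, rfl⟩ := List.getElem?_eq_some_iff.mp ht
  simpa using List.findIdx_getElem (w := hlt)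

-- `T[k]? = none` exactly when no such subsequence exists: nonempty sets in `ℕ` have a least element
def IsMinEndList (L T : List ℕ) : Prop :=
  ∀ k t, T[k]? = some t ↔ IsLeast {v | IncSubseqEndingAt L k v} t

theorem isMinEndList_nil : IsMinEndList [] [] := by
  intro k t
  simp only [List.getElem?_nil, reduceCtorEq, false_iff]
  rintro ⟨⟨w, hsub, -, hlen, -⟩, -⟩
  simp [List.sublist_nil.mp hsub] at hlen

namespace IsMinEndList

variable {L T : List ℕ}

theorem exists_getElem?_le (h : IsMinEndList L T) {k v : ℕ} (hv : IncSubseqEndingAt L k v) :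
    ∃ t ≤ v, T[k]? = some t := by
  have hleast := isLeast_csInf (s := {v | IncSubseqEndingAt L k v}) ⟨v, hv⟩
  exact ⟨_, hleast.2 hv, (h k _).mpr hleast⟩

theorem exists_incSubseqEndingAt_iff_lt_length (h : IsMinEndList L T) {k : ℕ} :
    (∃ v, IncSubseqEndingAt L k v) ↔ k < T.length := by
  constructor
  · rintro ⟨v, hv⟩
    obtain ⟨t, -, ht⟩ := h.exists_getElem?_le hv
    exact (List.getElem?_eq_some_iff.mp ht).1
  · intro hk
    exact ⟨_, ((h k _).mp (List.getElem?_eq_getElem hk)).1⟩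

theorem length_eq_lisLen (h : IsMinEndList L T) : T.length = lisLen L := by
  have hset : {n | ∃ w : List ℕ, w.Sublist L ∧ w.Pairwise (· < ·) ∧ w.length = n}
      = Set.Iic T.length := by
    ext n
    rcases n with _ | k
    · simp only [Set.mem_Iic, zero_le, iff_true]
      exact ⟨[], List.nil_sublist L, List.Pairwise.nil, rfl⟩
    · rw [Set.mem_ofPred_eq, ← exists_incSubseqEndingAt_iff,
        h.exists_incSubseqEndingAt_iff_lt_length]
      exact Nat.lt_iff_add_one_le
  rw [lisLen, hset, csSup_Iic]

variable {x : ℕ}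

theorem isLeast_findIdx (h : IsMinEndList L T) :
    IsLeast {v | IncSubseqEndingAt (L ++ [x]) (T.findIdx (x ≤ ·)) v} x := by
  constructor
  · refine incSubseqEndingAt_append_singleton_iff.mpr (Or.inr ⟨rfl, ?_⟩)
    rcases Nat.eq_zero_or_pos (T.findIdx (x ≤ ·)) with h0 | hpos
    · exact Or.inl h0
    · obtain ⟨t, htx, ht⟩ := exists_getElem?_lt_of_lt_findIdx (Nat.sub_one_lt_of_lt hpos)
      exact Or.inr ⟨t, htx, ((h _ t).mp ht).1⟩
  · intro v hv
    rcases incSubseqEndingAt_append_singleton_iff.mp hv with hv | ⟨rfl, -⟩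
    · obtain ⟨t, htv, ht⟩ := h.exists_getElem?_le hv
      exact (le_of_getElem?_findIdx ht).trans htv
    · exact le_rfl

theorem isLeast_append_singleton_iff_of_lt_findIdx (h : IsMinEndList L T) {k t : ℕ}
    (hk : k < T.findIdx (x ≤ ·)) :
    IsLeast {v | IncSubseqEndingAt (L ++ [x]) k v} t ↔ IsLeast {v | IncSubseqEndingAt L k v} t := by
  obtain ⟨t₀, ht₀x, ht₀⟩ := exists_getElem?_lt_of_lt_findIdx hk
  have hS := (h k t₀).mp ht₀
  have hS' : IsLeast {v | IncSubseqEndingAt (L ++ [x]) k v} t₀ := by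
    refine ⟨incSubseqEndingAt_append_singleton_iff.mpr (Or.inl hS.1), fun v hv => ?_⟩
    rcases incSubseqEndingAt_append_singleton_iff.mp hv with hv | ⟨rfl, -⟩
    exacts [hS.2 hv, ht₀x.le]
  exact ⟨fun ht => hS'.unique ht ▸ hS, fun ht => hS.unique ht ▸ hS'⟩

theorem incSubseqEndingAt_append_singleton_iff_of_findIdx_lt (h : IsMinEndList L T) {k v : ℕ}
    (hk : T.findIdx (x ≤ ·) < k) :
    IncSubseqEndingAt (L ++ [x]) k v ↔ IncSubseqEndingAt L k v := by
  rw [incSubseqEndingAt_append_singleton_iff, or_iff_left]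
  rintro ⟨rfl, hk0 | ⟨u, hux, hu⟩⟩
  · omega
  -- truncating such a subsequence to length `findIdx + 1` gives a last element below `x`
  obtain ⟨u', hu'u, hu'⟩ := hu.exists_le_of_le (Nat.le_sub_one_of_lt hk)
  obtain ⟨t, htu', ht⟩ := h.exists_getElem?_le hu'
  have := le_of_getElem?_findIdx ht
  omega

theorem insertTails (h : IsMinEndList L T) (x : ℕ) :
    IsMinEndList (L ++ [x]) (insertTails T x) := by
  intro k t
  rw [getElem?_insertTails]
  rcases lt_trichotomy k (T.findIdx (x ≤ ·)) with hk | rfl | hk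
  · rw [if_neg hk.ne, h.isLeast_append_singleton_iff_of_lt_findIdx hk]
    exact h k t
  · rw [if_pos rfl, Option.some_inj]
    exact ⟨fun hxt => hxt ▸ h.isLeast_findIdx, fun ht => h.isLeast_findIdx.unique ht⟩
  · simp only [if_neg hk.ne', h.incSubseqEndingAt_append_singleton_iff_of_findIdx_lt hk]
    exact h k t

end IsMinEndList

theorem isMinEndList_tails (L : List ℕ) : IsMinEndList L (tails L) := by
  induction L using List.reverseRecOn with
  | nil => exact isMinEndList_nil
  | append_singleton L x ih =>
    rw [tails, List.foldl_concat]
    exact ih.insertTails x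

theorem threshold_structure_correct (L : List ℕ) :
    (tails L).length = lisLen L ∧
    ∀ k (hk : k < (tails L).length),
      IsLeast {v | ∃ w : List ℕ, w.Sublist L ∧ w.Pairwise (· < ·) ∧
        w.length = k + 1 ∧ w.getLast? = some v} ((tails L)[k]'hk) := by
  have h := isMinEndList_tails L
  exact ⟨h.length_eq_lisLen, fun k hk => (h k _).mp (List.getElem?_eq_getElem hk)⟩
end

section
/- The length of a longest tandem scattered subsequence of a string F equals the maximum over all decompositions F = P ++ S of the length of a longest common scattered subsequence of P and S. -/
noncomputable def ltssLen {α : Type*} (F : List α) : ℕ :=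
  sSup {n | ∃ w : List α, (w ++ w).Sublist F ∧ w.length = n}

theorem ltss_eq_max_split_lcs {α : Type*} (F : List α) :
    ltssLen F = sSup {k | ∃ P S : List α, F = P ++ S ∧ k = lcsLen P S} := by
  have hbddA : BddAbove {n | ∃ w : List α, (w ++ w).Sublist F ∧ w.length = n} := by
    refine ⟨F.length, ?_⟩
    rintro n ⟨w, hw, rfl⟩
    have := hw.length_le
    simp only [List.length_append] at this
    omega
  apply le_antisymm
  · refine csSup_le ⟨0, ⟨[], by simp, rfl⟩⟩ ?_
    rintro n ⟨w, hw, rfl⟩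
    rw [List.append_sublist_iff] at hw
    obtain ⟨P, S, hF, hP, hS⟩ := hw
    have h1 : w.length ≤ lcsLen P S := by
      apply le_csSup
      · refine ⟨P.length, ?_⟩
        rintro m ⟨v, hv, -, rfl⟩
        exact hv.length_le
      · exact ⟨w, hP, hS, rfl⟩
    refine h1.trans (le_csSup ?_ ⟨P, S, hF, rfl⟩)
    refine ⟨F.length, ?_⟩
    rintro k ⟨P', S', hF', rfl⟩
    refine csSup_le ⟨0, ⟨[], by simp, by simp, rfl⟩⟩ ?_
    rintro m ⟨v, hvP, -, rfl⟩
    calc v.length ≤ P'.length := hvP.length_le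
      _ ≤ F.length := by simp [hF']
  · refine csSup_le ⟨lcsLen [] F, ⟨[], F, by simp, rfl⟩⟩ ?_
    rintro k ⟨P, S, rfl, rfl⟩
    refine csSup_le ⟨0, ⟨[], by simp, by simp, rfl⟩⟩ ?_
    rintro n ⟨w, hP, hS, rfl⟩
    exact le_csSup hbddA ⟨w, hP.append hS, rfl⟩
end

section
/- Decremental relation of DP tables: let F = P ++ S with S = c :: S', and P' = P ++ [c]. Let D be the LCS table of (P, S) and D' the LCS table of (P', S'). Then for all i ≤ |P| and 1 ≤ j ≤ |S'|+1: D'[i, j-1] ∈ {D[i, j], D[i, j] − 1}, i.e., each retained entry either stays the same or decreases by exactly 1 when the first letter of S is removed. -/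
lemma lcs_bdd {α : Type*} (P S : List α) :
    BddAbove {n | ∃ w : List α, w.Sublist P ∧ w.Sublist S ∧ w.length = n} :=
  ⟨S.length, fun n ⟨_, _, hS, hl⟩ => hl ▸ hS.length_le⟩

lemma lcs_ne {α : Type*} (P S : List α) :
    Set.Nonempty {n | ∃ w : List α, w.Sublist P ∧ w.Sublist S ∧ w.length = n} :=
  ⟨0, [], List.nil_sublist _, List.nil_sublist _, rfl⟩

lemma lcs_le_of_sublist {α : Type*} (P : List α) {S₁ S₂ : List α} (h : S₁.Sublist S₂) :
    lcsLen P S₁ ≤ lcsLen P S₂ := by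
  refine csSup_le (lcs_ne P S₁) ?_
  rintro n ⟨w, hP, hS, hl⟩
  exact le_csSup (lcs_bdd P S₂) ⟨w, hP, hS.trans h, hl⟩

lemma lcs_cons_le {α : Type*} (P T : List α) (c : α) :
    lcsLen P (c :: T) ≤ lcsLen P T + 1 := by
  refine csSup_le (lcs_ne P _) ?_
  rintro n ⟨w, hP, hS, hl⟩
  rcases List.sublist_cons_iff.mp hS with h | ⟨r, rfl, hr⟩
  · exact (le_csSup (lcs_bdd P T) ⟨w, hP, h, hl⟩).trans (Nat.le_succ _)
  · have hrP : r.Sublist P := (List.sublist_cons_self c r).trans hP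
    have : r.length ≤ lcsLen P T := le_csSup (lcs_bdd P T) ⟨r, hrP, hr, rfl⟩
    simp only [← hl, List.length_cons]
    omega

theorem decremental_dp_relation {α : Type*} (P S S' : List α) (c : α)
    (hS : S = c :: S') (i j : ℕ) (hj : 1 ≤ j) :
    lcsLen (P.take i) (S.take j) - 1 ≤ lcsLen (P.take i) (S'.take (j - 1)) ∧
    lcsLen (P.take i) (S'.take (j - 1)) ≤ lcsLen (P.take i) (S.take j) := by
  obtain ⟨j', rfl⟩ : ∃ j', j = j' + 1 := ⟨j - 1, by omega⟩
  subst hS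
  simp only [List.take_succ_cons, Nat.add_sub_cancel]
  constructor
  · have := lcs_cons_le (P.take i) (S'.take j') c
    omega
  · exact lcs_le_of_sublist _ (List.sublist_cons_self c _)
end
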